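/- Let a > 0 and b ∈ ℝᵖ, set y'ᵢ = a·yᵢ + xᵢᵀb, and fix ν > 0. Then for every (β,σ) ∈ ℝᵖ × (0,∞), the observed information matrix for the nuisance parameters satisfies j(ν, aβ+b, aσ; y') = a⁻²·j(ν, β, σ; y) entrywise, and hence det j(ν, aβ+b, aσ; y') = a^{−2(p+1)}·det j(ν, β, σ; y). -/

import Mathlib

open Real Finset

/-- Observed information matrix for the nuisance parameters `λ = (β, σ)` in the
Student-t regression model, indexed by `Fin p ⊕ Unit` (the `Fin p` block for `β`,
the `Unit` entry for `σ`). -/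
noncomputable def obsInfo (n p : ℕ) (y : Fin n → ℝ) (x : Fin n → Fin p → ℝ)
    (ν : ℝ) (β : Fin p → ℝ) (σ : ℝ) :
    Matrix (Fin p ⊕ Unit) (Fin p ⊕ Unit) ℝ :=
  fun k l =>
    match k, l with
    | Sum.inl k, Sum.inl l =>
        (ν + 1) * ∑ i, x i k * x i l *
          (ν * σ ^ 2 - (y i - ∑ j, x i j * β j) ^ 2) /
            (ν * σ ^ 2 + (y i - ∑ j, x i j * β j) ^ 2) ^ 2
    | Sum.inl k, Sum.inr _ =>
        2 * ν * σ * (ν + 1) * ∑ i, (y i - ∑ j, x i j * β j) * x i k /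
          (ν * σ ^ 2 + (y i - ∑ j, x i j * β j) ^ 2) ^ 2
    | Sum.inr _, Sum.inl l =>
        2 * ν * σ * (ν + 1) * ∑ i, (y i - ∑ j, x i j * β j) * x i l /
          (ν * σ ^ 2 + (y i - ∑ j, x i j * β j) ^ 2) ^ 2
    | Sum.inr _, Sum.inr _ =>
        -(n : ℝ) / σ ^ 2 + (ν + 1) * ∑ i,
          ((y i - ∑ j, x i j * β j) ^ 2 /
              (σ ^ 2 * (ν * σ ^ 2 + (y i - ∑ j, x i j * β j) ^ 2))
            + 2 * ν * (y i - ∑ j, x i j * β j) ^ 2 /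
                (ν * σ ^ 2 + (y i - ∑ j, x i j * β j) ^ 2) ^ 2)

theorem obsInfo_location_scale_equivariance
    (n p : ℕ) (y : Fin n → ℝ) (x : Fin n → Fin p → ℝ)
    (a : ℝ) (ha : 0 < a) (b : Fin p → ℝ)
    (ν : ℝ) (hν : 0 < ν)
    (β : Fin p → ℝ) (σ : ℝ) (hσ : 0 < σ) :
    obsInfo n p (fun i => a * y i + ∑ j, x i j * b j) x ν
        (fun j => a * β j + b j) (a * σ)
      = a⁻¹ ^ 2 • obsInfo n p y x ν β σ ∧
    (obsInfo n p (fun i => a * y i + ∑ j, x i j * b j) x ν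
        (fun j => a * β j + b j) (a * σ)).det
      = a ^ (-(2 * ((p : ℤ) + 1))) * (obsInfo n p y x ν β σ).det := by

  have ha0 : a ≠ 0 := ne_of_gt ha
  have hr : ∀ i : Fin n, (a * y i + ∑ j, x i j * b j) - ∑ j, x i j * (a * β j + b j)
      = a * (y i - ∑ j, x i j * β j) := by
    intro i
    have : ∑ j, x i j * (a * β j + b j) = a * (∑ j, x i j * β j) + ∑ j, x i j * b j := by
      rw [Finset.mul_sum, ← Finset.sum_add_distrib]
      exact Finset.sum_congr rfl (fun j _ => by ring)
    rw [this]; ring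
  have hD : ∀ i : Fin n, ν * σ ^ 2 + (y i - ∑ j, x i j * β j) ^ 2 ≠ 0 := by
    intro i; positivity
  have hD2 : ∀ i : Fin n, ν * (a * σ) ^ 2 + (a * (y i - ∑ j, x i j * β j)) ^ 2 ≠ 0 := by
    intro i; positivity
  have h1 : obsInfo n p (fun i => a * y i + ∑ j, x i j * b j) x ν
      (fun j => a * β j + b j) (a * σ) = a⁻¹ ^ 2 • obsInfo n p y x ν β σ := by
    ext k l
    rcases k with k | k <;> rcases l with l | l <;>
      simp only [obsInfo, Matrix.smul_apply, smul_eq_mul, hr]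
    · have hs : ∀ i : Fin n, x i k * x i l *
          (ν * (a * σ) ^ 2 - (a * (y i - ∑ j, x i j * β j)) ^ 2) /
            (ν * (a * σ) ^ 2 + (a * (y i - ∑ j, x i j * β j)) ^ 2) ^ 2
          = a⁻¹ ^ 2 * (x i k * x i l * (ν * σ ^ 2 - (y i - ∑ j, x i j * β j) ^ 2) /
            (ν * σ ^ 2 + (y i - ∑ j, x i j * β j) ^ 2) ^ 2) := by
        intro i
        field_simp
      rw [Finset.sum_congr rfl (fun i _ => hs i), ← Finset.mul_sum]
      ring
    · have hs : ∀ i : Fin n, a * (y i - ∑ j, x i j * β j) * x i k /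
          (ν * (a * σ) ^ 2 + (a * (y i - ∑ j, x i j * β j)) ^ 2) ^ 2
          = a⁻¹ ^ 3 * ((y i - ∑ j, x i j * β j) * x i k /
            (ν * σ ^ 2 + (y i - ∑ j, x i j * β j) ^ 2) ^ 2) := by
        intro i
        field_simp
      rw [Finset.sum_congr rfl (fun i _ => hs i), ← Finset.mul_sum]
      field_simp
    · have hs : ∀ i : Fin n, a * (y i - ∑ j, x i j * β j) * x i l /
          (ν * (a * σ) ^ 2 + (a * (y i - ∑ j, x i j * β j)) ^ 2) ^ 2
          = a⁻¹ ^ 3 * ((y i - ∑ j, x i j * β j) * x i l /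
            (ν * σ ^ 2 + (y i - ∑ j, x i j * β j) ^ 2) ^ 2) := by
        intro i
        field_simp
      rw [Finset.sum_congr rfl (fun i _ => hs i), ← Finset.mul_sum]
      field_simp
    · have hs : ∀ i : Fin n, ((a * (y i - ∑ j, x i j * β j)) ^ 2 /
            ((a * σ) ^ 2 * (ν * (a * σ) ^ 2 + (a * (y i - ∑ j, x i j * β j)) ^ 2))
          + 2 * ν * (a * (y i - ∑ j, x i j * β j)) ^ 2 /
              (ν * (a * σ) ^ 2 + (a * (y i - ∑ j, x i j * β j)) ^ 2) ^ 2)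
          = a⁻¹ ^ 2 * ((y i - ∑ j, x i j * β j) ^ 2 /
              (σ ^ 2 * (ν * σ ^ 2 + (y i - ∑ j, x i j * β j) ^ 2))
            + 2 * ν * (y i - ∑ j, x i j * β j) ^ 2 /
                (ν * σ ^ 2 + (y i - ∑ j, x i j * β j) ^ 2) ^ 2) := by
        intro i
        have := hD i
        have := hD2 i
        field_simp
      rw [Finset.sum_congr rfl (fun i _ => hs i), ← Finset.mul_sum]
      field_simp
  refine ⟨h1, ?_⟩
  rw [h1, Matrix.det_smul]
  congr 1
  have hcard : Fintype.card (Fin p ⊕ Unit) = p + 1 := by simp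
  rw [hcard]
  have h2 : (-(2 * ((p : ℤ) + 1))) = -((2 * (p + 1) : ℕ) : ℤ) := by push_cast; ring
  rw [h2, zpow_neg, zpow_natCast, ← inv_pow, ← pow_mul]
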